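/- Let λ > 0, r_max > 0, and let o, õ ∈ ℝ with õ = (∑_{t=1}^N c_t r_t)/(λ + ∑_{t=1}^N c_t), where c_t ≥ 0, |r_t| ≤ r_max, |o| ≤ r_max, and |r_t - o| ≤ B for all t with c_t > 0. Then |õ - o| ≤ B + λ r_max / (λ + ∑_{t=1}^N c_t). -/
import Mathlib


/-- Core estimation-error bound for the regularized least-squares reward estimator. -/
theorem regularized_estimator_error (L rmax B o : ℝ) (N : ℕ) (c r : Fin N → ℝ)
    (hL : 0 < L) (hr : 0 < rmax) (hB : 0 ≤ B)
    (hc : ∀ t, 0 ≤ c t) (hrb : ∀ t, |r t| ≤ rmax) (ho : |o| ≤ rmax)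
    (hdrift : ∀ t, 0 < c t → |r t - o| ≤ B)
    (otilde : ℝ) (hot : otilde = (∑ t, c t * r t) / (L + ∑ t, c t)) :
    |otilde - o| ≤ B + L * rmax / (L + ∑ t, c t) := by
  set S := ∑ t, c t with hS
  have hS0 : 0 ≤ S := Finset.sum_nonneg fun t _ => hc t
  have hD : 0 < L + S := by linarith
  have key : otilde - o = ((∑ t, c t * (r t - o)) - L * o) / (L + S) := by
    rw [hot]
    field_simp
    simp [Finset.sum_sub_distrib, mul_sub, ← Finset.sum_mul]
    ring
  rw [key]
  rw [abs_div, abs_of_pos hD, div_le_iff₀ hD]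
  have h1 : |(∑ t, c t * (r t - o)) - L * o| ≤ |∑ t, c t * (r t - o)| + L * rmax := by
    calc _ ≤ |∑ t, c t * (r t - o)| + |L * o| := abs_sub _ _
    _ ≤ _ := by
        gcongr
        rw [abs_mul, abs_of_pos hL]
        gcongr
  have h2 : |∑ t, c t * (r t - o)| ≤ S * B := by
    calc |∑ t, c t * (r t - o)| ≤ ∑ t, |c t * (r t - o)| := Finset.abs_sum_le_sum_abs _ _
    _ ≤ ∑ t, c t * B := by
        apply Finset.sum_le_sum
        intro t _
        rw [abs_mul, abs_of_nonneg (hc t)]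
        rcases eq_or_lt_of_le (hc t) with h | h
        · simp [← h]
        · exact mul_le_mul_of_nonneg_left (hdrift t h) (hc t)
    _ = S * B := by rw [← Finset.sum_mul]
  have hSB : S * B ≤ (L + S) * B := by nlinarith
  calc |(∑ t, c t * (r t - o)) - L * o| ≤ S * B + L * rmax := by
        simpa using h1.trans (by linarith)
  _ ≤ (L + S) * B + L * rmax := by linarith
  _ = (B + L * rmax / (L + S)) * (L + S) := by field_simp
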